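/- Structural (syntactic) equivalence checking of state formulas does not terminate in general: for the formula φ = (□a) U (◇b), letting σ = {a} and defining φ₀ = φ and φₙ₊₁ = fp(φₙ, σ), the formulas φ₀, φ₁, φ₂, ... are pairwise semantically equivalent but pairwise structurally distinct (no two have the same syntax tree); in particular the sequence of syntactically distinct progressions is infinite. -/
import Mathlib


namespace LTLfSynth

open scoped Classical

/-- LTLf formulas in negation normal form. -/
inductive LTLf (P : Type*) where
  | tt : LTLf P
  | ff : LTLf P
  | atom : P → LTLf P
  | natom : P → LTLf P
  | and : LTLf P → LTLf P → LTLf P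
  | or : LTLf P → LTLf P → LTLf P
  | next : LTLf P → LTLf P
  | wnext : LTLf P → LTLf P
  | until_ : LTLf P → LTLf P → LTLf P
  | release : LTLf P → LTLf P → LTLf P

variable {P : Type*}

/-- ◇true -/
def diamondTrue : LTLf P := .until_ .tt .tt

/-- □false -/
def boxFalse : LTLf P := .release .ff .ff

/-- Finite-trace satisfaction `ρ, i ⊨ φ`, where position `ρ.length` (and beyond)
corresponds to the empty suffix (empty-trace semantics). -/
def Sat (ρ : List (Set P)) : LTLf P → ℕ → Prop
  | .tt, _ => True
  | .ff, _ => False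
  | .atom p, i => i < ρ.length ∧ p ∈ ρ.getD i ∅
  | .natom p, i => i < ρ.length ∧ p ∉ ρ.getD i ∅
  | .and φ ψ, i => Sat ρ φ i ∧ Sat ρ ψ i
  | .or φ ψ, i => Sat ρ φ i ∨ Sat ρ ψ i
  | .next φ, i => i + 1 < ρ.length ∧ Sat ρ φ (i + 1)
  | .wnext φ, i => i + 1 < ρ.length → Sat ρ φ (i + 1)
  | .until_ φ ψ, i =>
      ∃ j, i ≤ j ∧ j < ρ.length ∧ Sat ρ ψ j ∧ ∀ k, i ≤ k → k < j → Sat ρ φ k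
  | .release φ ψ, i =>
      ∀ j, i ≤ j → j < ρ.length → (Sat ρ ψ j ∨ ∃ k, i ≤ k ∧ k < j ∧ Sat ρ φ k)

/-- Single-step formula progression `fp σ φ = fp(φ, σ)`. -/
noncomputable def fp (σ : Set P) : LTLf P → LTLf P
  | .tt => .tt
  | .ff => .ff
  | .atom p => if p ∈ σ then .tt else .ff
  | .natom p => if p ∈ σ then .ff else .tt
  | .and φ ψ => .and (fp σ φ) (fp σ ψ)
  | .or φ ψ => .or (fp σ φ) (fp σ ψ)
  | .next φ => .and φ diamondTrue
  | .wnext φ => .or φ boxFalse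
  | .until_ .tt .tt => .tt
  | .until_ φ ψ => .or (fp σ ψ) (.and (fp σ φ) (.and (.until_ φ ψ) diamondTrue))
  | .release .ff .ff => .ff
  | .release φ ψ => .and (fp σ ψ) (.or (fp σ φ) (.or (.release φ ψ) boxFalse))

/-- The sequence `φ₀ = (□a) U (◇b)`, `φₙ₊₁ = fp(φₙ, {a})`. -/
noncomputable def phiSeq (a b : P) : ℕ → LTLf P
  | 0 => .until_ (.release .ff (.atom a)) (.until_ .tt (.atom b))
  | n + 1 => fp {a} (phiSeq a b n)

/-! ### Auxiliary machinery -/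

lemma fp_until_ne (σ : Set P) (φ ψ : LTLf P) (h : ¬(φ = LTLf.tt ∧ ψ = LTLf.tt)) :
    fp σ (.until_ φ ψ) = .or (fp σ ψ) (.and (fp σ φ) (.and (.until_ φ ψ) diamondTrue)) := by
  cases φ <;> cases ψ <;> simp_all [fp]

lemma fp_release_ne (σ : Set P) (φ ψ : LTLf P) (h : ¬(φ = LTLf.ff ∧ ψ = LTLf.ff)) :
    fp σ (.release φ ψ) = .and (fp σ ψ) (.or (fp σ φ) (.or (.release φ ψ) boxFalse)) := by
  cases φ <;> cases ψ <;> simp_all [fp]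

/-! ### Semantics lemmas -/

lemma sat_dT (ρ : List (Set P)) (i : ℕ) : Sat ρ diamondTrue i ↔ i < ρ.length := by
  constructor
  · rintro ⟨j, h1, h2, -, -⟩; omega
  · intro h; exact ⟨i, le_rfl, h, trivial, fun _ _ _ => trivial⟩

lemma sat_bF (ρ : List (Set P)) (i : ℕ) : Sat ρ boxFalse i ↔ ρ.length ≤ i := by
  constructor
  · intro h
    by_contra hc
    rcases h i le_rfl (by omega) with h' | ⟨k, _, _, h'⟩ <;> exact h'.elim
  · intro h j h1 h2; omega

lemma sat_and (ρ : List (Set P)) (φ ψ : LTLf P) (i : ℕ) :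
    Sat ρ (.and φ ψ) i ↔ Sat ρ φ i ∧ Sat ρ ψ i := by simp only [Sat]

lemma sat_or (ρ : List (Set P)) (φ ψ : LTLf P) (i : ℕ) :
    Sat ρ (.or φ ψ) i ↔ Sat ρ φ i ∨ Sat ρ ψ i := by simp only [Sat]

lemma sat_next (ρ : List (Set P)) (φ : LTLf P) (i : ℕ) :
    Sat ρ (.next φ) i ↔ i + 1 < ρ.length ∧ Sat ρ φ (i + 1) := by simp only [Sat]

lemma sat_wnext (ρ : List (Set P)) (φ : LTLf P) (i : ℕ) :
    Sat ρ (.wnext φ) i ↔ (i + 1 < ρ.length → Sat ρ φ (i + 1)) := by simp only [Sat]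

lemma sat_until (ρ : List (Set P)) (φ ψ : LTLf P) (i : ℕ) :
    Sat ρ (.until_ φ ψ) i ↔
      ∃ j, i ≤ j ∧ j < ρ.length ∧ Sat ρ ψ j ∧ ∀ k, i ≤ k → k < j → Sat ρ φ k := by
  simp only [Sat]

lemma sat_release (ρ : List (Set P)) (φ ψ : LTLf P) (i : ℕ) :
    Sat ρ (.release φ ψ) i ↔
      ∀ j, i ≤ j → j < ρ.length → (Sat ρ ψ j ∨ ∃ k, i ≤ k ∧ k < j ∧ Sat ρ φ k) := by
  simp only [Sat]

lemma sat_shift (σ : Set P) (ρ : List (Set P)) (φ : LTLf P) :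
    ∀ i, Sat (σ :: ρ) φ (i + 1) ↔ Sat ρ φ i := by
  induction φ with
  | tt => intro i; simp [Sat]
  | ff => intro i; simp [Sat]
  | atom p => intro i; simp [Sat, Nat.succ_lt_succ_iff]
  | natom p => intro i; simp [Sat, Nat.succ_lt_succ_iff]
  | and φ ψ ihφ ihψ => intro i; simp only [Sat]; rw [ihφ, ihψ]
  | or φ ψ ihφ ihψ => intro i; simp only [Sat]; rw [ihφ, ihψ]
  | next φ ih => intro i; simp only [Sat]; rw [ih]; simp [Nat.succ_lt_succ_iff]
  | wnext φ ih => intro i; simp only [Sat]; rw [ih]; simp [Nat.succ_lt_succ_iff]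
  | until_ φ ψ ihφ ihψ =>
    intro i
    constructor
    · rintro ⟨j, hij, hjl, hψ, hk⟩
      obtain ⟨j', rfl⟩ : ∃ j', j = j' + 1 := ⟨j - 1, by omega⟩
      have hl : j' < ρ.length := by simpa using hjl
      exact ⟨j', by omega, hl, (ihψ j').mp hψ,
        fun k hik hkj => (ihφ k).mp (hk (k + 1) (by omega) (by omega))⟩
    · rintro ⟨j, hij, hjl, hψ, hk⟩
      refine ⟨j + 1, by omega, by simp; omega, (ihψ j).mpr hψ, ?_⟩
      intro k h1 h2
      obtain ⟨k', rfl⟩ : ∃ k', k = k' + 1 := ⟨k - 1, by omega⟩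
      exact (ihφ k').mpr (hk k' (by omega) (by omega))
  | release φ ψ ihφ ihψ =>
    intro i
    constructor
    · intro h j hij hjl
      rcases h (j + 1) (by omega) (by simp; omega) with hψ | ⟨k, h1, h2, hφ⟩
      · exact Or.inl ((ihψ j).mp hψ)
      · obtain ⟨k', rfl⟩ : ∃ k', k = k' + 1 := ⟨k - 1, by omega⟩
        exact Or.inr ⟨k', by omega, by omega, (ihφ k').mp hφ⟩
    · intro h j hij hjl
      obtain ⟨j', rfl⟩ : ∃ j', j = j' + 1 := ⟨j - 1, by omega⟩
      have hjl' : j' < ρ.length := by simpa using hjl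
      rcases h j' (by omega) hjl' with hψ | ⟨k, h1, h2, hφ⟩
      · exact Or.inl ((ihψ j').mpr hψ)
      · exact Or.inr ⟨k + 1, by omega, by omega, (ihφ k).mpr hφ⟩

lemma sat_fp (σ : Set P) (ρ : List (Set P)) (φ : LTLf P) :
    Sat (σ :: ρ) φ 0 ↔ Sat ρ (fp σ φ) 0 := by
  induction φ with
  | tt => simp [Sat, fp]
  | ff => simp [Sat, fp]
  | atom p =>
    by_cases hp : p ∈ σ <;> simp [Sat, fp, hp]
  | natom p =>
    by_cases hp : p ∈ σ <;> simp [Sat, fp, hp]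
  | and φ ψ ihφ ihψ =>
    rw [show fp σ (.and φ ψ) = .and (fp σ φ) (fp σ ψ) from rfl, sat_and, sat_and, ihφ, ihψ]
  | or φ ψ ihφ ihψ =>
    rw [show fp σ (.or φ ψ) = .or (fp σ φ) (fp σ ψ) from rfl, sat_or, sat_or, ihφ, ihψ]
  | next φ ih =>
    rw [show fp σ (.next φ) = .and φ diamondTrue from rfl, sat_next, sat_and, sat_dT,
      sat_shift]
    simp [Nat.succ_lt_succ_iff, and_comm]
  | wnext φ ih =>
    rw [show fp σ (.wnext φ) = .or φ boxFalse from rfl, sat_wnext, sat_or, sat_bF,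
      sat_shift]
    simp only [List.length_cons, Nat.succ_lt_succ_iff]
    constructor
    · intro h
      by_cases h0 : 0 < ρ.length
      · exact Or.inl (h h0)
      · exact Or.inr (by omega)
    · rintro (h | h) h0
      · exact h
      · omega
  | until_ φ ψ ihφ ihψ =>
    by_cases h : φ = LTLf.tt ∧ ψ = LTLf.tt
    · obtain ⟨rfl, rfl⟩ := h
      rw [show (LTLf.until_ LTLf.tt LTLf.tt : LTLf P) = diamondTrue from rfl,
        show fp σ (diamondTrue : LTLf P) = LTLf.tt from rfl, sat_dT]
      simp [Sat]
    · rw [fp_until_ne σ φ ψ h, sat_or, sat_and, sat_and, sat_dT, ← ihφ, ← ihψ,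
        show Sat ρ (LTLf.until_ φ ψ) 0 ↔ Sat (σ :: ρ) (LTLf.until_ φ ψ) 1 from
          (sat_shift σ ρ _ 0).symm, sat_until, sat_until]
      constructor
      · rintro ⟨j, -, hjl, hψ, hk⟩
        rcases Nat.eq_zero_or_pos j with rfl | hj
        · exact Or.inl hψ
        · refine Or.inr ⟨hk 0 le_rfl hj, ⟨j, by omega, hjl, hψ,
            fun k h1 h2 => hk k (by omega) h2⟩, ?_⟩
          have : j < ρ.length + 1 := by simpa using hjl
          omega
      · rintro (hψ | ⟨hφ0, ⟨j, hj1, hjl, hψ, hk⟩, hlen⟩)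
        · exact ⟨0, le_rfl, by simp, hψ, fun k h1 h2 => by omega⟩
        · refine ⟨j, by omega, hjl, hψ, fun k h1 h2 => ?_⟩
          rcases Nat.eq_zero_or_pos k with rfl | hk0
          · exact hφ0
          · exact hk k (by omega) h2
  | release φ ψ ihφ ihψ =>
    by_cases h : φ = LTLf.ff ∧ ψ = LTLf.ff
    · obtain ⟨rfl, rfl⟩ := h
      rw [show (LTLf.release LTLf.ff LTLf.ff : LTLf P) = boxFalse from rfl,
        show fp σ (boxFalse : LTLf P) = LTLf.ff from rfl, sat_bF]
      simp [Sat]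
    · rw [fp_release_ne σ φ ψ h, sat_and, sat_or, sat_or, sat_bF, ← ihφ, ← ihψ,
        show Sat ρ (LTLf.release φ ψ) 0 ↔ Sat (σ :: ρ) (LTLf.release φ ψ) 1 from
          (sat_shift σ ρ _ 0).symm, sat_release, sat_release]
      constructor
      · intro h'
        have hψ0 : Sat (σ :: ρ) ψ 0 := by
          rcases h' 0 le_rfl (by simp) with h0 | ⟨k, _, hk, _⟩
          · exact h0
          · omega
        refine ⟨hψ0, ?_⟩
        by_cases hφ0 : Sat (σ :: ρ) φ 0
        · exact Or.inl hφ0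
        · by_cases hlen : ρ.length = 0
          · exact Or.inr (Or.inr (by omega))
          · refine Or.inr (Or.inl ?_)
            intro j h1 h2
            rcases h' j (by omega) h2 with hψ | ⟨k, hk1, hk2, hφ⟩
            · exact Or.inl hψ
            · rcases Nat.eq_zero_or_pos k with rfl | hk0
              · exact absurd hφ hφ0
              · exact Or.inr ⟨k, by omega, hk2, hφ⟩
      · rintro ⟨hψ0, hrest⟩ j hj1 hj2
        rcases Nat.eq_zero_or_pos j with rfl | hj
        · exact Or.inl hψ0
        · rcases hrest with hφ0 | hR1 | hlen
          · exact Or.inr ⟨0, le_rfl, hj, hφ0⟩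
          · rcases hR1 j (by omega) hj2 with hψ | ⟨k, hk1, hk2, hφ⟩
            · exact Or.inl hψ
            · exact Or.inr ⟨k, by omega, hk2, hφ⟩
          · have : j < ρ.length + 1 := by simpa using hj2
            omega

/-- The semantic content of every `phiSeq a b n`: some position of the trace contains `b`. -/
lemma sat_phiSeq (a b : P) (hab : a ≠ b) :
    ∀ n (ρ : List (Set P)),
      Sat ρ (phiSeq a b n) 0 ↔ ∃ j, j < ρ.length ∧ b ∈ ρ.getD j ∅ := by
  intro n
  induction n with
  | zero =>
    intro ρ
    constructor
    · rintro ⟨j, -, hjl, ⟨j', hj1, hj2, hb, -⟩, -⟩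
      exact ⟨j', hj2, hb.2⟩
    · rintro ⟨j, hjl, hb⟩
      refine ⟨0, le_rfl, by omega, ⟨j, by omega, hjl, ⟨hjl, hb⟩, fun _ _ _ => trivial⟩,
        fun k h1 h2 => by omega⟩
  | succ n ih =>
    intro ρ
    have : Sat ρ (phiSeq a b (n + 1)) 0 ↔ Sat (({a} : Set P) :: ρ) (phiSeq a b n) 0 :=
      (sat_fp _ _ _).symm
    rw [this, ih]
    constructor
    · rintro ⟨j, hjl, hb⟩
      rcases Nat.eq_zero_or_pos j with rfl | hj
      · exact absurd (by simpa using hb) (Ne.symm hab)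
      · obtain ⟨j', rfl⟩ : ∃ j', j = j' + 1 := ⟨j - 1, by omega⟩
        exact ⟨j', by simpa using hjl, by simpa using hb⟩
    · rintro ⟨j, hjl, hb⟩
      exact ⟨j + 1, by simp [hjl], by simpa using hb⟩

/-! ### Syntactic machinery -/

/-- The list of subterms of a formula. -/
def subs : LTLf P → List (LTLf P)
  | .tt => [.tt]
  | .ff => [.ff]
  | .atom p => [.atom p]
  | .natom p => [.natom p]
  | .and φ ψ => .and φ ψ :: (subs φ ++ subs ψ)
  | .or φ ψ => .or φ ψ :: (subs φ ++ subs ψ)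
  | .next φ => .next φ :: subs φ
  | .wnext φ => .wnext φ :: subs φ
  | .until_ φ ψ => .until_ φ ψ :: (subs φ ++ subs ψ)
  | .release φ ψ => .release φ ψ :: (subs φ ++ subs ψ)

/-- No `next`/`wnext` constructors. -/
def nn : LTLf P → Prop
  | .tt => True
  | .ff => True
  | .atom _ => True
  | .natom _ => True
  | .and φ ψ => nn φ ∧ nn ψ
  | .or φ ψ => nn φ ∧ nn ψ
  | .next _ => False
  | .wnext _ => False
  | .until_ φ ψ => nn φ ∧ nn ψ
  | .release φ ψ => nn φ ∧ nn ψ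

/-- Count of nontrivial `until_` nodes. -/
noncomputable def ntu : LTLf P → ℕ
  | .tt => 0
  | .ff => 0
  | .atom _ => 0
  | .natom _ => 0
  | .and φ ψ => ntu φ + ntu ψ
  | .or φ ψ => ntu φ + ntu ψ
  | .next φ => ntu φ
  | .wnext φ => ntu φ
  | .until_ φ ψ => ntu φ + ntu ψ + (if φ = LTLf.tt ∧ ψ = LTLf.tt then 0 else 1)
  | .release φ ψ => ntu φ + ntu ψ

/-- `φ₀ = (□a) U (◇b)`. -/
def phi0 (a b : P) : LTLf P :=
  .until_ (.release .ff (.atom a)) (.until_ .tt (.atom b))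

lemma ntu_dT : ntu (diamondTrue : LTLf P) = 0 := by simp [ntu, diamondTrue]

lemma ntu_bF : ntu (boxFalse : LTLf P) = 0 := by simp [ntu, boxFalse]

lemma nn_dT : nn (diamondTrue : LTLf P) := by simp [nn, diamondTrue]

lemma nn_bF : nn (boxFalse : LTLf P) := by simp [nn, boxFalse]

lemma nn_fp (σ : Set P) : ∀ φ : LTLf P, nn φ → nn (fp σ φ) := by
  intro φ
  induction φ with
  | tt => intro _; simp [fp, nn]
  | ff => intro _; simp [fp, nn]
  | atom p => intro _; by_cases hp : p ∈ σ <;> simp [fp, nn, hp]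
  | natom p => intro _; by_cases hp : p ∈ σ <;> simp [fp, nn, hp]
  | and φ ψ ihφ ihψ => rintro ⟨h1, h2⟩; exact ⟨ihφ h1, ihψ h2⟩
  | or φ ψ ihφ ihψ => rintro ⟨h1, h2⟩; exact ⟨ihφ h1, ihψ h2⟩
  | next φ ih => intro h; exact h.elim
  | wnext φ ih => intro h; exact h.elim
  | until_ φ ψ ihφ ihψ =>
    rintro ⟨h1, h2⟩
    by_cases h : φ = LTLf.tt ∧ ψ = LTLf.tt
    · obtain ⟨rfl, rfl⟩ := h; simp [fp, nn]
    · rw [fp_until_ne σ φ ψ h]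
      exact ⟨ihψ h2, ihφ h1, ⟨h1, h2⟩, nn_dT⟩
  | release φ ψ ihφ ihψ =>
    rintro ⟨h1, h2⟩
    by_cases h : φ = LTLf.ff ∧ ψ = LTLf.ff
    · obtain ⟨rfl, rfl⟩ := h; simp [fp, nn]
    · rw [fp_release_ne σ φ ψ h]
      exact ⟨ihψ h2, ihφ h1, ⟨h1, h2⟩, nn_bF⟩

lemma occ_fp (a b : P) (σ : Set P) :
    ∀ φ : LTLf P, phi0 a b ∈ subs φ → phi0 a b ∈ subs (fp σ φ) := by
  intro φ
  induction φ with
  | tt => intro h; simpa [subs, phi0] using h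
  | ff => intro h; simpa [subs, phi0] using h
  | atom p => intro h; simpa [subs, phi0] using h
  | natom p => intro h; simpa [subs, phi0] using h
  | and φ ψ ihφ ihψ =>
    intro h
    simp only [subs, List.mem_cons, List.mem_append] at h
    rcases h with h | h | h
    · exact absurd h (by simp [phi0])
    · simp only [fp, subs, List.mem_cons, List.mem_append]
      exact Or.inr (Or.inl (ihφ h))
    · simp only [fp, subs, List.mem_cons, List.mem_append]
      exact Or.inr (Or.inr (ihψ h))
  | or φ ψ ihφ ihψ =>
    intro h
    simp only [subs, List.mem_cons, List.mem_append] at h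
    rcases h with h | h | h
    · exact absurd h (by simp [phi0])
    · simp only [fp, subs, List.mem_cons, List.mem_append]
      exact Or.inr (Or.inl (ihφ h))
    · simp only [fp, subs, List.mem_cons, List.mem_append]
      exact Or.inr (Or.inr (ihψ h))
  | next φ ih =>
    intro h
    simp only [subs, List.mem_cons] at h
    rcases h with h | h
    · exact absurd h (by simp [phi0])
    · simp only [fp, subs, List.mem_cons, List.mem_append]
      exact Or.inr (Or.inl h)
  | wnext φ ih =>
    intro h
    simp only [subs, List.mem_cons] at h
    rcases h with h | h
    · exact absurd h (by simp [phi0])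
    · simp only [fp, subs, List.mem_cons, List.mem_append]
      exact Or.inr (Or.inl h)
  | until_ φ ψ ihφ ihψ =>
    intro h
    by_cases htt : φ = LTLf.tt ∧ ψ = LTLf.tt
    · obtain ⟨rfl, rfl⟩ := htt
      exact absurd h (by simp [subs, phi0])
    · rw [fp_until_ne σ φ ψ htt]
      simp only [subs, List.mem_cons, List.mem_append] at h ⊢
      tauto
  | release φ ψ ihφ ihψ =>
    intro h
    by_cases hff : φ = LTLf.ff ∧ ψ = LTLf.ff
    · obtain ⟨rfl, rfl⟩ := hff
      exact absurd h (by simp [subs, phi0])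
    · rw [fp_release_ne σ φ ψ hff]
      simp only [subs, List.mem_cons, List.mem_append] at h ⊢
      tauto

lemma ntu_fp_mono (σ : Set P) : ∀ φ : LTLf P, ntu φ ≤ ntu (fp σ φ) := by
  intro φ
  induction φ with
  | tt => simp [fp, ntu]
  | ff => simp [fp, ntu]
  | atom p => by_cases hp : p ∈ σ <;> simp [fp, ntu, hp]
  | natom p => by_cases hp : p ∈ σ <;> simp [fp, ntu, hp]
  | and φ ψ ihφ ihψ => simp only [fp, ntu]; omega
  | or φ ψ ihφ ihψ => simp only [fp, ntu]; omega
  | next φ ih => simp only [fp, ntu, ntu_dT]; omega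
  | wnext φ ih => simp only [fp, ntu, ntu_bF]; omega
  | until_ φ ψ ihφ ihψ =>
    by_cases htt : φ = LTLf.tt ∧ ψ = LTLf.tt
    · obtain ⟨rfl, rfl⟩ := htt; simp [fp, ntu]
    · rw [fp_until_ne σ φ ψ htt]
      simp only [ntu, ntu_dT, if_neg htt]
      omega
  | release φ ψ ihφ ihψ =>
    by_cases hff : φ = LTLf.ff ∧ ψ = LTLf.ff
    · obtain ⟨rfl, rfl⟩ := hff; simp [fp, ntu]
    · rw [fp_release_ne σ φ ψ hff]
      simp only [ntu, ntu_bF]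
      omega

lemma ntu_fp_strict (a b : P) (σ : Set P) :
    ∀ φ : LTLf P, nn φ → phi0 a b ∈ subs φ → ntu φ + 1 ≤ ntu (fp σ φ) := by
  intro φ
  induction φ with
  | tt => intro _ h; exact absurd h (by simp [subs, phi0])
  | ff => intro _ h; exact absurd h (by simp [subs, phi0])
  | atom p => intro _ h; exact absurd h (by simp [subs, phi0])
  | natom p => intro _ h; exact absurd h (by simp [subs, phi0])
  | and φ ψ ihφ ihψ =>
    rintro ⟨h1, h2⟩ h
    simp only [subs, List.mem_cons, List.mem_append] at h
    rcases h with h | h | h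
    · exact absurd h (by simp [phi0])
    · have := ihφ h1 h
      simp only [fp, ntu]
      have h2' : ntu ψ ≤ ntu (fp σ ψ) := ntu_fp_mono σ ψ
      omega
    · have := ihψ h2 h
      simp only [fp, ntu]
      have h1' : ntu φ ≤ ntu (fp σ φ) := ntu_fp_mono σ φ
      omega
  | or φ ψ ihφ ihψ =>
    rintro ⟨h1, h2⟩ h
    simp only [subs, List.mem_cons, List.mem_append] at h
    rcases h with h | h | h
    · exact absurd h (by simp [phi0])
    · have := ihφ h1 h
      simp only [fp, ntu]
      have h2' : ntu ψ ≤ ntu (fp σ ψ) := ntu_fp_mono σ ψ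
      omega
    · have := ihψ h2 h
      simp only [fp, ntu]
      have h1' : ntu φ ≤ ntu (fp σ φ) := ntu_fp_mono σ φ
      omega
  | next φ ih => intro h; exact h.elim
  | wnext φ ih => intro h; exact h.elim
  | until_ φ ψ ihφ ihψ =>
    rintro ⟨h1, h2⟩ h
    by_cases htt : φ = LTLf.tt ∧ ψ = LTLf.tt
    · obtain ⟨rfl, rfl⟩ := htt
      exact absurd h (by simp [subs, phi0])
    · rw [fp_until_ne σ φ ψ htt]
      simp only [subs, List.mem_cons, List.mem_append] at h
      have hne : (if φ = LTLf.tt ∧ ψ = LTLf.tt then 0 else 1) = 1 := if_neg htt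
      rcases h with h | h | h
      · -- φ = □a, ψ = ◇b
        rw [phi0] at h
        injection h.symm with e1 e2
        subst e1; subst e2
        have e1 : ntu (fp σ (LTLf.until_ LTLf.tt (LTLf.atom b))) = 1 := by
          rw [fp_until_ne σ _ _ (by simp)]
          by_cases hb : b ∈ σ <;> simp [fp, ntu, ntu_dT, hb]
        have e2 : ntu (fp σ (LTLf.release LTLf.ff (LTLf.atom a))) = 0 := by
          rw [fp_release_ne σ _ _ (by simp)]
          by_cases ha : a ∈ σ <;> simp [fp, ntu, ntu_bF, ha]
        simp only [ntu, e1, e2, ntu_dT]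
        have e3 : ntu (fp σ (LTLf.atom b)) = 0 := by
          by_cases hb : b ∈ σ <;> simp [fp, hb, ntu]
        have e4 : ntu (fp σ (LTLf.atom a)) = 0 := by
          by_cases ha : a ∈ σ <;> simp [fp, ha, ntu]
        simp [e3, e4]
      · have := ihφ h1 h
        simp only [ntu, ntu_dT, hne]
        omega
      · have := ihψ h2 h
        simp only [ntu, ntu_dT, hne]
        omega
  | release φ ψ ihφ ihψ =>
    rintro ⟨h1, h2⟩ h
    by_cases hff : φ = LTLf.ff ∧ ψ = LTLf.ff
    · obtain ⟨rfl, rfl⟩ := hff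
      exact absurd h (by simp [subs, phi0])
    · rw [fp_release_ne σ φ ψ hff]
      simp only [subs, List.mem_cons, List.mem_append] at h
      rcases h with h | h | h
      · exact absurd h (by simp [phi0])
      · have := ihφ h1 h
        simp only [ntu, ntu_bF]
        omega
      · have := ihψ h2 h
        simp only [ntu, ntu_bF]
        omega

lemma phiSeq_succ (a b : P) (n : ℕ) : phiSeq a b (n + 1) = fp {a} (phiSeq a b n) := rfl

lemma nn_phiSeq (a b : P) : ∀ n, nn (phiSeq a b n) := by
  intro n
  induction n with
  | zero => exact ⟨⟨trivial, trivial⟩, trivial, trivial⟩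
  | succ n ih => exact nn_fp _ _ ih

lemma occ_phiSeq (a b : P) : ∀ n, phi0 a b ∈ subs (phiSeq a b n) := by
  intro n
  induction n with
  | zero => simp [phiSeq, phi0, subs]
  | succ n ih => exact occ_fp a b _ _ ih

lemma ntu_phiSeq_strictMono (a b : P) : StrictMono (fun n => ntu (phiSeq a b n)) := by
  apply strictMono_nat_of_lt_succ
  intro n
  have := ntu_fp_strict a b {a} (phiSeq a b n) (nn_phiSeq a b n) (occ_phiSeq a b n)
  rw [phiSeq_succ]
  omega

/-- the progressions `φ₀, φ₁, …` of `(□a) U (◇b)` under `σ = {a}` are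
pairwise semantically equivalent but pairwise syntactically distinct. -/
theorem hashconsing_nontermination (a b : P) (hab : a ≠ b) (m n : ℕ) :
    (∀ ρ : List (Set P), Sat ρ (phiSeq a b m) 0 ↔ Sat ρ (phiSeq a b n) 0) ∧
    (m ≠ n → phiSeq a b m ≠ phiSeq a b n) := by
  refine ⟨fun ρ => (sat_phiSeq a b hab m ρ).trans (sat_phiSeq a b hab n ρ).symm,
    fun hmn heq => hmn ((ntu_phiSeq_strictMono a b).injective (by rw [heq]))⟩

end LTLfSynth
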